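/- arXiv:2012.09964 — 2 statements merged into one kernel-verified Lean document; each statement's English description precedes it below -/
import Mathlib

section
/- Let m ∈ M be a monitor and let s be an integer with 0 ≤ s ≤ σ − 1. Then the following are equivalent: (1) for every set V' = {m} ∪ F where F ⊆ N is a set of non-monitors with |F| ≤ s, every connected component of G − V' contains at least one monitor; (2) the auxiliary graph G_m is (s+1)-vertex-connected. -/
open SimpleGraph

/-- A measurement path in `G`: a walk together with its two endpoints. -/
abbrev MWalk {V : Type*} (G : SimpleGraph V) := Σ u : V, Σ v : V, G.Walk u v

/-- A measurement path traverses a node `x` iff `x` lies on the walk. -/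
def Traverses {V : Type*} {G : SimpleGraph V} (p : MWalk G) (x : V) : Prop :=
  x ∈ p.2.2.support

/-- Two failure sets `F`, `F'` are distinguishable w.r.t. the collection `P` of
measurement paths: some path of `P` traverses a node of one set but no node of
the other. -/
def Distinguishable {V : Type*} {G : SimpleGraph V} (P : Set (MWalk G))
    (F F' : Set V) : Prop :=
  (∃ p ∈ P, (∃ x ∈ F, Traverses p x) ∧ ∀ x ∈ F', ¬ Traverses p x) ∨
  (∃ p ∈ P, (∃ x ∈ F', Traverses p x) ∧ ∀ x ∈ F, ¬ Traverses p x)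

/-- `k`-identifiability w.r.t. paths `P`, where failure sets range over subsets
of the non-monitor set `Nm`. -/
def Identifiable {V : Type*} {G : SimpleGraph V} (P : Set (MWalk G))
    (Nm : Set V) (k : ℕ) : Prop :=
  ∀ F F' : Set V, F ⊆ Nm → F' ⊆ Nm → F.ncard ≤ k → F'.ncard ≤ k → F ≠ F' →
    Distinguishable P F F'

/-- CAP measurement paths: all walks whose two endpoints are monitors
(endpoints may coincide, nodes may be revisited). -/
def CAP {V : Type*} (G : SimpleGraph V) (M : Set V) : Set (MWalk G) :=
  { p | p.1 ∈ M ∧ p.2.1 ∈ M }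

/-- CSP measurement paths: all simple (cycle-free) paths whose two endpoints
are distinct monitors. -/
def CSP {V : Type*} (G : SimpleGraph V) (M : Set V) : Set (MWalk G) :=
  { p | p.1 ∈ M ∧ p.2.1 ∈ M ∧ p.1 ≠ p.2.1 ∧ p.2.2.IsPath }

/-- Every connected component of `G − V'` contains at least one monitor. -/
def ComponentsHaveMonitor {V : Type*} (G : SimpleGraph V) (M : Set V)
    (V' : Set V) : Prop :=
  ∀ v : ↥(V'ᶜ), ∃ m : ↥(V'ᶜ), (m : V) ∈ M ∧ (G.induce V'ᶜ).Reachable v m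

/-- The auxiliary graph on the non-monitors `Nm` plus a new virtual monitor
`m'` (the vertex `none`), where the monitors in `M'` are used to create the
virtual links: edges of `G` between non-monitors are kept; `m'` is joined to
each non-monitor adjacent in `G` to some monitor in `M'`; and two non-monitors
each adjacent in `G` to some monitor in `M'` are joined.
`G* = StarGraph G Mᶜ M` and `G_m = StarGraph G Mᶜ (M \ {m})`. -/
def StarGraph {V : Type*} (G : SimpleGraph V) (Nm M' : Set V) :
    SimpleGraph (Option ↥Nm) where
  Adj x y :=
    match x, y with
    | none, none => False
    | none, some u => ∃ m ∈ M', G.Adj (u : V) m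
    | some u, none => ∃ m ∈ M', G.Adj (u : V) m
    | some u, some w => (u : V) ≠ (w : V) ∧
        (G.Adj (u : V) (w : V) ∨
          ((∃ m ∈ M', G.Adj (u : V) m) ∧ ∃ m ∈ M', G.Adj (w : V) m))
  symm := by
    refine ⟨?_⟩
    rintro (_ | u) (_ | w) h
    · exact h
    · exact h
    · exact h
    · exact ⟨fun e => h.1 e.symm, h.2.imp (fun hh => hh.symm) fun hh => ⟨hh.2, hh.1⟩⟩
  loopless := by
    refine ⟨?_⟩
    rintro (_ | u) h
    · exact h
    · exact h.1 rfl

/-- A graph `H` is `k`-vertex-connected: it has more than `k` vertices and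
removing fewer than `k` vertices leaves it connected. -/
def KConnected {W : Type*} (H : SimpleGraph W) (k : ℕ) : Prop :=
  k < Nat.card W ∧ ∀ S : Set W, S.ncard < k → (H.induce Sᶜ).Connected

/-- The vertex connectivity `δ(H)`: the largest `k` such that `H` is
`k`-vertex-connected. -/
noncomputable def vertexConnectivity {W : Type*} (H : SimpleGraph W) : ℕ :=
  sSup { k | KConnected H k }

/-- The maximum identifiability: the largest `k ∈ {0, …, |Nm|}` such that the
network is `k`-identifiable w.r.t. `P`. -/
noncomputable def maxIdent {V : Type*} {G : SimpleGraph V} (P : Set (MWalk G))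
    (Nm : Set V) : ℕ :=
  sSup { k | k ≤ Nm.ncard ∧ Identifiable P Nm k }

/-- `MSC(v)`: the minimum cardinality of a set `V' ⊆ Nm \ {v}` of non-monitors
such that every path of `P` traversing `v` traverses some node of `V'`
(`⊤ = ∞` if no such set exists). -/
noncomputable def MSC {V : Type*} {G : SimpleGraph V} (P : Set (MWalk G))
    (Nm : Set V) (v : V) : ℕ∞ :=
  sInf { n : ℕ∞ | ∃ V' : Set V, V' ⊆ Nm \ {v} ∧
    (∀ p ∈ P, Traverses p v → ∃ x ∈ V', Traverses p x) ∧ n = (V'.ncard : ℕ∞) }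

/-!
Let `F` be a set of non-monitors and `S` the corresponding vertex set of `G_m`. A walk of
`G − ({m} ∪ F)` from a non-monitor to a monitor stays among non-monitors until it steps onto a
monitor of `M \ {m}`, so it yields a walk of `G_m − S` to a vertex attached to `M \ {m}`.
Conversely, every edge of `G_m` not coming from `G` has an attached endpoint, which is one step
away from a monitor of `G − ({m} ∪ F)`. Finally, the attached vertices form a clique joined to
the virtual monitor, so deleting the virtual monitor as well cannot disconnect `G_m − S`.
-/

open Set

theorem Set.ncard_preimage_le_of_injective {α β : Type*} {f : α → β} (hf : f.Injective)
    {s : Set β} (hs : s.Finite := by toFinite_tac) : (f ⁻¹' s).ncard ≤ s.ncard := by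
  rw [← ncard_image_of_injective _ hf]
  exact ncard_le_ncard (image_preimage_subset f s) hs

namespace StarGraph

variable {V : Type*} {G : SimpleGraph V} {Nm M' : Set V}

theorem adj_some_none {u : Nm} :
    (StarGraph G Nm M').Adj (some u) none ↔ ∃ m ∈ M', G.Adj u m :=
  Iff.rfl

theorem adj_some_some {u w : Nm} :
    (StarGraph G Nm M').Adj (some u) (some w) ↔ (u : V) ≠ w ∧
      (G.Adj u w ∨ ((∃ m ∈ M', G.Adj u m) ∧ ∃ m ∈ M', G.Adj w m)) :=
  Iff.rfl

theorem adj_some_some_of_adj {u w : Nm} (h : G.Adj u w) :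
    (StarGraph G Nm M').Adj (some u) (some w) :=
  adj_some_some.2 ⟨h.ne, .inl h⟩

/-- A walk of `G − K` leaving `Nm` must do so through an edge into `M'`; its part inside
`Nm` survives in `G_m − T`. -/
theorem exists_reachable_attached_of_walk {K : Set V} {T : Set (Option Nm)}
    (hT : ∀ u : Nm, (u : V) ∈ K → some u ∈ T) (hKM' : K \ Nm ⊆ M') :
    ∀ {v w : K} (_ : (G.induce K).Walk v w) (hv : (v : V) ∈ Nm), (w : V) ∉ Nm →
      ∃ x : Nm, ∃ hx : some x ∈ T, (∃ m ∈ M', G.Adj x m) ∧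
        ((StarGraph G Nm M').induce T).Reachable
          ⟨some ⟨v, hv⟩, hT _ v.2⟩ ⟨some x, hx⟩ := by
  intro v w p
  induction p with
  | nil => exact fun hv hw => absurd hv hw
  | @cons a b w hab q ih =>
    intro ha hw
    by_cases hb : (b : V) ∈ Nm
    · obtain ⟨x, hx, hxM', hbx⟩ := ih hb hw
      have hab : ((StarGraph G Nm M').induce T).Adj ⟨some ⟨a, ha⟩, hT _ a.2⟩
          ⟨some ⟨b, hb⟩, hT _ b.2⟩ := adj_some_some_of_adj hab
      exact ⟨x, hx, hxM', hab.reachable.trans hbx⟩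
    · exact ⟨⟨a, ha⟩, _, ⟨b, hKM' ⟨b.2, hb⟩, hab⟩, .rfl⟩

theorem exists_reachable_mem_of_walk_to_none {K : Set V} {T : Set (Option Nm)}
    (hT : ∀ u : Nm, some u ∈ T → (u : V) ∈ K) (hM'K : M' ⊆ K) :
    ∀ {a b : T} (_ : ((StarGraph G Nm M').induce T).Walk a b) (x : Nm) (hx : a.val = some x),
      b.val = none →
        ∃ w : K, (w : V) ∈ M' ∧ (G.induce K).Reachable ⟨x, hT x (hx ▸ a.2)⟩ w := by
  intro a b p
  induction p with
  | nil => intro x hx hnone; simp [hx] at hnone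
  | @cons a c b hac q ih =>
    intro x hx hb
    have hac : (StarGraph G Nm M').Adj (some x) c.val := hx ▸ hac
    have of_attached : ∀ m ∈ M', G.Adj x m →
        ∃ w : K, (w : V) ∈ M' ∧ (G.induce K).Reachable ⟨x, hT x (hx ▸ a.2)⟩ w :=
      fun m hm hxm => ⟨⟨m, hM'K hm⟩, hm, Adj.reachable hxm⟩
    rcases hc : c.val with _ | y
    · obtain ⟨m, hm, hxm⟩ := adj_some_none.1 (hc ▸ hac)
      exact of_attached m hm hxm
    · rcases (adj_some_some.1 (hc ▸ hac)).2 with hxy | ⟨⟨m, hm, hxm⟩, -⟩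
      · obtain ⟨w, hw, hyw⟩ := ih y hc hb
        have hxy : (G.induce K).Adj ⟨x, hT x (hx ▸ a.2)⟩ ⟨y, hT y (hc ▸ c.2)⟩ := hxy
        exact ⟨w, hw, hxy.reachable.trans hyw⟩
      · exact of_attached m hm hxm

/-- Vertices attached to `M'` are pairwise adjacent and adjacent to the virtual monitor, so they
all lie in one component of `G_m − T`. -/
theorem connected_induce_of_forall_reachable_attached {T : Set (Option Nm)} (hT : T.Nonempty)
    (h : ∀ u : Nm, ∀ hu : some u ∈ T, ∃ x : Nm, ∃ hx : some x ∈ T,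
      (∃ m ∈ M', G.Adj x m) ∧
        ((StarGraph G Nm M').induce T).Reachable ⟨some u, hu⟩ ⟨some x, hx⟩) :
    ((StarGraph G Nm M').induce T).Connected := by
  have : Nonempty T := hT.to_subtype
  refine ⟨fun a b => ?_⟩
  by_cases hnone : none ∈ T
  · have to_none : ∀ c : T, ((StarGraph G Nm M').induce T).Reachable c ⟨none, hnone⟩ := by
      rintro ⟨_ | u, hu⟩
      · rfl
      · obtain ⟨x, hx, ⟨m, hm, hxm⟩, hux⟩ := h u hu
        exact hux.trans (Adj.reachable (adj_some_none.2 ⟨m, hm, hxm⟩))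
    exact (to_none a).trans (to_none b).symm
  · obtain ⟨_ | u, hu⟩ := a
    · exact absurd hu hnone
    obtain ⟨_ | w, hw⟩ := b
    · exact absurd hw hnone
    obtain ⟨x, hx, hxM', hux⟩ := h u hu
    obtain ⟨y, hy, hyM', hwy⟩ := h w hw
    refine hux.trans (Reachable.trans ?_ hwy.symm)
    by_cases hxy : x = y
    · subst hxy; rfl
    · exact Adj.reachable <|
        adj_some_some.2 ⟨Subtype.coe_injective.ne hxy, .inr ⟨hxM', hyM'⟩⟩

end StarGraph

open StarGraph

theorem mem_compl_singleton_union_iff {V : Type*} {M F : Set V} {m : V} (hm : m ∈ M)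
    (u : ↥Mᶜ) : (u : V) ∈ ({m} ∪ F)ᶜ ↔ (u : V) ∉ F := by
  have : (u : V) ≠ m := fun h => u.2 (h ▸ hm)
  simp [this]

theorem stmt_8_general {V : Type*} [Fintype V] (G : SimpleGraph V)
    (M : Set V) (m : V) (hm : m ∈ M) (s : ℕ)
    (hs : s + 1 ≤ Mᶜ.ncard) :
    (∀ F : Set V, F ⊆ Mᶜ → F.ncard ≤ s →
        ComponentsHaveMonitor G M ({m} ∪ F)) ↔
      KConnected (StarGraph G Mᶜ (M \ {m})) (s + 1) := by
  have hcard : Nat.card (Option ↥Mᶜ) = Mᶜ.ncard + 1 := by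
    rw [Finite.card_option, Nat.card_coe_set_eq]
  constructor
  · intro h
    refine ⟨by omega, fun S hS => ?_⟩
    set F : Set V := Subtype.val '' (Option.some ⁻¹' S)
    have hFS : F.ncard ≤ S.ncard :=
      (ncard_image_of_injective _ Subtype.val_injective).trans_le
        (ncard_preimage_le_of_injective (Option.some_injective _))
    have hF := h F (by simp [F, image_subset_iff]) (by omega)
    have hT (u : ↥Mᶜ) : some u ∈ Sᶜ ↔ (u : V) ∈ ({m} ∪ F)ᶜ := by
      rw [mem_compl_singleton_union_iff hm, Subtype.val_injective.mem_set_image]; rfl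
    refine connected_induce_of_forall_reachable_attached ?_ fun u hu => ?_
    · refine nonempty_compl.2 fun hS' => ?_
      rw [hS', ncard_univ] at hS
      omega
    · obtain ⟨w, hw, ⟨p⟩⟩ := hF ⟨u, (hT u).1 hu⟩
      refine exists_reachable_attached_of_walk (fun u => (hT u).2) ?_ p u.2 (not_not.2 hw)
      rintro x ⟨hxK, hxM⟩
      exact ⟨not_not.1 hxM, fun hxm => hxK (.inl hxm)⟩
  · intro hK F hF hFs v
    by_cases hv : (v : V) ∈ M
    · exact ⟨v, hv, .rfl⟩
    set S : Set (Option ↥Mᶜ) := Option.some '' (Subtype.val ⁻¹' F)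
    have hSF : S.ncard ≤ F.ncard :=
      (ncard_image_of_injective _ (Option.some_injective _)).trans_le
        (ncard_preimage_le_of_injective Subtype.val_injective)
    have hT (u : ↥Mᶜ) : some u ∈ Sᶜ ↔ (u : V) ∈ ({m} ∪ F)ᶜ := by
      rw [mem_compl_singleton_union_iff hm, mem_compl_iff,
        (Option.some_injective _).mem_set_image]; rfl
    obtain ⟨p⟩ := (hK.2 S (by omega)).preconnected
      ⟨some ⟨v, hv⟩, (hT _).2 v.2⟩ ⟨none, by simp [S]⟩
    have hM'K : M \ {m} ⊆ ({m} ∪ F)ᶜ := by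
      rintro x ⟨hxM, hxm⟩ (hxm' | hxF)
      exacts [hxm hxm', hF hxF hxM]
    obtain ⟨w, hw, hvw⟩ :=
      exists_reachable_mem_of_walk_to_none (fun u => (hT u).1) hM'K p _ rfl rfl
    exact ⟨w, hw.1, hvw⟩

/-- For a monitor `m` and `0 ≤ s ≤ σ − 1`: every component of
`G − ({m} ∪ F)` contains a monitor for every set `F` of at most `s`
non-monitors iff the auxiliary graph `G_m` is `(s+1)`-vertex-connected. -/
theorem stmt_8 {V : Type*} [Fintype V] (G : SimpleGraph V) (hG : G.Connected)
    (M : Set V) (hM : M.Nonempty) (m : V) (hm : m ∈ M) (s : ℕ)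
    (hs : s + 1 ≤ Mᶜ.ncard) :
    (∀ F : Set V, F ⊆ Mᶜ → F.ncard ≤ s →
        ComponentsHaveMonitor G M ({m} ∪ F)) ↔
      KConnected (StarGraph G Mᶜ (M \ {m})) (s + 1) :=
  stmt_8_general G M m hm s hs
end

section
/- G is σ-identifiable under CSP if and only if every non-monitor is adjacent in G to at least two monitors. -/
/-!
A simple monitor-to-monitor path that, among the non-monitors, passes only through `v` has `v` as
an interior vertex; its two neighbours on the path are then distinct monitors adjacent to `v`.
Conversely, if `v` has two monitor neighbours `m₁ ≠ m₂`, the path `m₁ v m₂` meets no non-monitor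
other than `v`, so it distinguishes any two failure sets of which exactly one contains `v`.
-/

open SimpleGraph

section

variable {V : Type*} {G : SimpleGraph V}

theorem SimpleGraph.Walk.IsPath.exists_adj_adj_of_mem_support {a b v : V} {w : G.Walk a b}
    (hw : w.IsPath) (hv : v ∈ w.support) (hva : v ≠ a) (hvb : v ≠ b) :
    ∃ x ∈ w.support, ∃ y ∈ w.support, x ≠ y ∧ G.Adj v x ∧ G.Adj v y := by
  induction w with
  | nil => exact absurd (List.mem_singleton.1 hv) hva
  | @cons a c b hac w ih =>
    rw [Walk.cons_isPath_iff] at hw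
    by_cases hvc : v = c
    · subst hvc
      cases w with
      | nil => exact absurd rfl hvb
      | @cons _ d _ hvd _ =>
        refine ⟨a, by simp, d, by simp, ?_, hac.symm, hvd⟩
        rintro rfl
        exact hw.2 (by simp)
    · have hv' : v ∈ w.support := (List.mem_cons.1 hv).resolve_left hva
      obtain ⟨x, hx, y, hy, hxy, hvx, hvy⟩ := ih hw.1 hv' hvc hvb
      exact ⟨x, by simp [hx], y, by simp [hy], hxy, hvx, hvy⟩

theorem Distinguishable.symm {P : Set (MWalk G)} {F F' : Set V} (h : Distinguishable P F F') :
    Distinguishable P F' F :=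
  Or.symm h

theorem exists_adj_monitors_of_distinguishable_compl_sdiff {M : Set V} {v : V} (hv : v ∈ Mᶜ)
    (h : Distinguishable (CSP G M) Mᶜ (Mᶜ \ {v})) :
    ∃ m₁ ∈ M, ∃ m₂ ∈ M, m₁ ≠ m₂ ∧ G.Adj v m₁ ∧ G.Adj v m₂ := by
  rcases h with ⟨⟨a, b, w⟩, ⟨ha, hb, -, hw⟩, ⟨x, hxM, hx⟩, havoid⟩ | ⟨p, -, ⟨x, hx, hxp⟩, havoid⟩
  · have mem_of_ne : ∀ y ∈ w.support, y ≠ v → y ∈ M := fun y hy hyv =>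
      by_contra fun hyM => havoid y ⟨hyM, hyv⟩ hy
    obtain rfl : x = v := by_contra fun hxv => havoid x ⟨hxM, hxv⟩ hx
    obtain ⟨y, hy, z, hz, hyz, hxy, hxz⟩ := hw.exists_adj_adj_of_mem_support hx
      (fun h => hxM (h ▸ ha)) (fun h => hxM (h ▸ hb))
    exact ⟨y, mem_of_ne y hy hxy.ne', z, mem_of_ne z hz hxz.ne', hyz, hxy, hxz⟩
  · exact (havoid x hx.1 hxp).elim

theorem distinguishable_CSP_of_mem_of_notMem {M F F' : Set V} {v : V} (hF' : F' ⊆ Mᶜ)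
    (hadj : ∃ m₁ ∈ M, ∃ m₂ ∈ M, m₁ ≠ m₂ ∧ G.Adj v m₁ ∧ G.Adj v m₂) (hvF : v ∈ F) (hvF' : v ∉ F') :
    Distinguishable (CSP G M) F F' := by
  obtain ⟨m₁, hm₁, m₂, hm₂, hne, h₁, h₂⟩ := hadj
  let p : MWalk G := ⟨m₁, m₂, .cons h₁.symm (.cons h₂ .nil)⟩
  have hp : p ∈ CSP G M := by
    refine ⟨hm₁, hm₂, hne, ?_⟩
    simp [p, Walk.isPath_def, h₁.ne', hne, h₂.ne]
  have havoid : ∀ x ∈ F', ¬ Traverses p x := by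
    intro x hx
    have hxM : x ∉ M := hF' hx
    simp only [Traverses, p, Walk.support_cons, Walk.support_nil, List.mem_cons,
      List.not_mem_nil, or_false]
    rintro (rfl | rfl | rfl)
    exacts [hxM hm₁, hvF' hx, hxM hm₂]
  exact Or.inl ⟨p, hp, ⟨v, hvF, by simp [Traverses, p]⟩, havoid⟩

end

theorem stmt_9_general {V : Type*} (G : SimpleGraph V)
    (M : Set V) :
    Identifiable (CSP G M) Mᶜ Mᶜ.ncard ↔
      ∀ v ∈ Mᶜ, ∃ m₁ ∈ M, ∃ m₂ ∈ M, m₁ ≠ m₂ ∧ G.Adj v m₁ ∧ G.Adj v m₂ := by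
  constructor
  · intro hid v hv
    have hne : Mᶜ ≠ Mᶜ \ {v} := fun h => (h ▸ hv : v ∈ Mᶜ \ {v}).2 rfl
    exact exists_adj_monitors_of_distinguishable_compl_sdiff hv
      (hid _ _ subset_rfl Set.sdiff_subset le_rfl (Set.ncard_sdiff_singleton_le _ _) hne)
  · intro h F F' hF hF' _ _ hne
    obtain ⟨v, ⟨hvF, hvF'⟩ | ⟨hvF', hvF⟩⟩ := Set.symmDiff_nonempty.2 hne
    · exact distinguishable_CSP_of_mem_of_notMem hF' (h v (hF hvF)) hvF hvF'
    · exact (distinguishable_CSP_of_mem_of_notMem hF (h v (hF' hvF')) hvF' hvF).symm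

/-- `G` is `σ`-identifiable under CSP iff every non-monitor is adjacent to at
least two monitors. -/
theorem stmt_9 {V : Type*} [Fintype V] (G : SimpleGraph V) (hG : G.Connected)
    (M : Set V) (hM : M.Nonempty) :
    Identifiable (CSP G M) Mᶜ Mᶜ.ncard ↔
      ∀ v ∈ Mᶜ, ∃ m₁ ∈ M, ∃ m₂ ∈ M, m₁ ≠ m₂ ∧ G.Adj v m₁ ∧ G.Adj v m₂ :=
  stmt_9_general G M
end
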